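/- Let p be a prime, δ = p^{−1/(p−1)}, and let F be a complete field of characteristic zero with a multiplicative nonarchimedean absolute value ‖·‖ whose restriction to ℚ is the p-adic absolute value. Let α₁, …, α_s ∈ F be distinct, let n = (n₁, …, n_s) ∈ ℕ^s have all coordinates positive with N = n₁+⋯+n_s, fix ℓ ∈ {1, …, s}, and set P = P_{n−e_ℓ}. Then: (a) for every i, ‖P(α_i)‖ ≤ p³·N·∏_{k=1}^s max(‖α_i − α_k‖, δ)^{n_k}; (b) if ‖α_i − α_k‖ = 1 for all k ≠ i, then ‖P(α_i)‖ ≤ ‖((n_i − 1)! : F)‖; (c) for every pair i, j with 0 < ‖α_j − α_i‖ < δ, ‖P(α_i)·exp(α_j − α_i) − P(α_j)‖ ≤ p³·N·∏_{k=1}^s max(‖α_i − α_k‖, ‖α_j − α_k‖)^{n_k}, where exp(x) = Σ_{m≥0} x^m/m!. -/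

import Mathlib

open Polynomial

/-- `f_m(z) = ∏ₖ (z − αₖ)^{mₖ}`. -/
noncomputable def fpoly {F : Type*} [Field F] {s : ℕ} (α : Fin s → F) (m : Fin s → ℕ) :
    F[X] := ∏ k, (X - C (α k)) ^ m k

/-- `P_m(z) = Σ_{j=0}^{M} f_m^{(j)}(z)`, the sum of `f_m` and all its derivatives. -/
noncomputable def Ppoly {F : Type*} [Field F] {s : ℕ} (α : Fin s → F) (m : Fin s → ℕ) :
    F[X] := ∑ j ∈ Finset.range (∑ k, m k + 1), derivative^[j] (fpoly α m)

/-- The exponential series `exp(x) = Σ_{m≥0} x^m/m!`. -/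
noncomputable def expF {F : Type*} [NormedField F] [CharZero F] (x : F) : F :=
  ∑' m : ℕ, x ^ m / (m.factorial : F)

open Finset Nat

/-! Around a point `x`, `f_m⁽ʲ⁾(x) = j! · cⱼ` with `cⱼ` the `j`-th coefficient of
`∏ₖ (X + (x - αₖ))^{mₖ}`. The Gauss norm is multiplicative for an ultrametric norm, so
`‖cⱼ‖ cʲ ≤ ∏ₖ max(‖x - αₖ‖, c)^{mₖ}` for every `c > 0`, and Legendre's formula gives
`δʲ ≤ ‖j!‖ ≤ p (j + 1) δʲ`. Taking `c = δ` gives (a). For (b) take `c = 1`: the coefficients have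
norm at most `1` and vanish below `j = mᵢ`, while `‖j!‖` decreases with `j`. For (c), Taylor
expansion writes `P(x) exp(h) - P(x + h)` as `Σⱼ f⁽ʲ⁾(x) (exp(h) - Σ_{t ≤ j} hᵗ/t!)`, the tail of
the exponential series has norm at most `(‖h‖/δ)^{j+1}`, and one takes `c = ‖h‖`. Passing from
`m = n - e_ℓ` to `n` costs one more factor `p`, because `pδ ≥ 1`. -/

namespace Polynomial

variable {F : Type*} [NormedField F]

lemma gaussNorm_X_add_C_le (c : ℝ) (b : F) :
    (X + C b).gaussNorm (NormedField.toAbsoluteValue F) c ≤ max ‖b‖ c := by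
  obtain ⟨i, hi⟩ := (X + C b).exists_eq_gaussNorm (NormedField.toAbsoluteValue F) c
  rw [hi]
  rcases i with _ | _ | i <;> simp [coeff_X, coeff_C, NormedField.toAbsoluteValue]

lemma norm_coeff_prod_X_add_C_pow_mul_pow_le [IsUltrametricDist F] {ι : Type*} (s : Finset ι)
    (b : ι → F) (m : ι → ℕ) {c : ℝ} (hc : 0 < c) (j : ℕ) :
    ‖(∏ k ∈ s, (X + C (b k)) ^ m k).coeff j‖ * c ^ j ≤ ∏ k ∈ s, max ‖b k‖ c ^ m k := by
  have := gaussNorm_isAbsoluteValue (v := NormedField.toAbsoluteValue F)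
    IsUltrametricDist.isNonarchimedean_norm hc
  let g := IsAbsoluteValue.abvHom (gaussNorm (NormedField.toAbsoluteValue F) c)
  calc _ ≤ g (∏ k ∈ s, (X + C (b k)) ^ m k) :=
        le_gaussNorm (NormedField.toAbsoluteValue F) _ hc.le j
    _ = ∏ k ∈ s, g (X + C (b k)) ^ m k := by simp only [map_prod, map_pow]
    _ ≤ _ := Finset.prod_le_prod (fun _ _ => pow_nonneg (gaussNorm_nonneg _ _ hc.le) _)
      fun _ _ => pow_le_pow_left₀ (gaussNorm_nonneg _ _ hc.le) (gaussNorm_X_add_C_le c _) _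

lemma eval_iterate_derivative_eq_factorial_mul_coeff_taylor {R : Type*} [CommSemiring R]
    (f : R[X]) (x : R) (j : ℕ) : (derivative^[j] f).eval x = j ! * (taylor x f).coeff j := by
  rw [taylor_coeff, ← factorial_smul_hasseDeriv]
  simp [nsmul_eq_mul]

variable {K : Type*} [Field K] [CharZero K]

lemma eval_add_eq_sum_range_iterate_derivative (f : K[X]) {n : ℕ} (hf : f.natDegree < n)
    (x h : K) : f.eval (x + h) = ∑ t ∈ range n, (derivative^[t] f).eval x * (h ^ t / t !) := by
  rw [add_comm, ← taylor_eval, eval_eq_sum_range' (by rwa [natDegree_taylor])]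
  refine sum_congr rfl fun t _ => ?_
  have : (t ! : K) ≠ 0 := Nat.cast_ne_zero.mpr t.factorial_ne_zero
  rw [eval_iterate_derivative_eq_factorial_mul_coeff_taylor]
  field_simp

lemma sum_range_iterate_derivative_eval_add (f : K[X]) {n : ℕ} (hf : f.natDegree < n)
    (x h : K) :
    ∑ q ∈ range n, (derivative^[q] f).eval (x + h) =
      ∑ q ∈ range n, (derivative^[q] f).eval x * ∑ t ∈ range (q + 1), h ^ t / t ! := by
  -- Taylor-expand each `f⁽q⁾` at `x`, then collect the terms `f⁽q + t⁾(x) hᵗ/t!` by `q + t`.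
  calc ∑ q ∈ range n, (derivative^[q] f).eval (x + h)
      = ∑ q ∈ range n, ∑ t ∈ range (n - q), (derivative^[t + q] f).eval x * (h ^ t / t !) := by
        refine sum_congr rfl fun q hq => ?_
        have : (derivative^[q] f).natDegree < n - q :=
          (natDegree_iterate_derivative f q).trans_lt (by have := mem_range.mp hq; omega)
        simp only [eval_add_eq_sum_range_iterate_derivative _ this, Function.iterate_add_apply]
    _ = ∑ q ∈ range n, ∑ t ∈ range (q + 1),
          (derivative^[q - t + t] f).eval x * (h ^ (q - t) / (q - t) !) :=
        (sum_range_diag_flip n fun t q => (derivative^[q + t] f).eval x * (h ^ q / q !)).symm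
    _ = _ := by
        refine sum_congr rfl fun q _ => ?_
        rw [mul_sum, ← sum_range_reflect]
        refine sum_congr rfl fun t ht => ?_
        replace ht : t ≤ q := Nat.lt_succ_iff.mp (mem_range.mp ht)
        rw [show q + 1 - 1 - t = q - t by omega, Nat.sub_sub_self ht, Nat.add_sub_cancel' ht]

end Polynomial

section Padic

variable {p : ℕ}

lemma le_sub_one_mul_padicValNat_factorial_add_length_digits [hp : Fact p.Prime] (j : ℕ) :
    j ≤ (p - 1) * (padicValNat p j ! + (p.digits j).length) := by
  have hS : (p.digits j).sum ≤ (p - 1) * (p.digits j).length := by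
    rw [mul_comm]
    exact List.sum_le_card_nsmul _ _ fun d hd => by
      have := Nat.digits_lt_base hp.out.one_lt hd; omega
  have := sub_one_mul_padicValNat_factorial (p := p) j
  have := Nat.digit_sum_le p j
  rw [mul_add]
  omega

lemma padicNorm_factorial_eq (j : ℕ) :
    (padicNorm p (j ! : ℚ) : ℝ) = (p : ℝ) ^ (-(padicValNat p j ! : ℝ)) := by
  rw [padicNorm.eq_zpow_of_nonzero (by exact_mod_cast j.factorial_ne_zero), padicValRat.of_nat,
    Rat.cast_zpow, ← Real.rpow_intCast, Rat.cast_natCast, Int.cast_neg, Int.cast_natCast]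

lemma rpow_neg_one_div_sub_one_pow (j : ℕ) :
    ((p : ℝ) ^ (-1 / ((p : ℝ) - 1))) ^ j = (p : ℝ) ^ (-(j : ℝ) / ((p : ℝ) - 1)) := by
  rw [← Real.rpow_natCast, ← Real.rpow_mul (Nat.cast_nonneg p)]
  ring_nf

lemma pow_le_padicNorm_factorial [hp : Fact p.Prime] (j : ℕ) :
    ((p : ℝ) ^ (-1 / ((p : ℝ) - 1))) ^ j ≤ padicNorm p (j ! : ℚ) := by
  have hp1 : (1 : ℝ) < p := by exact_mod_cast hp.out.one_lt
  rw [padicNorm_factorial_eq, rpow_neg_one_div_sub_one_pow]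
  apply Real.rpow_le_rpow_of_exponent_le hp1.le
  rw [neg_div, neg_le_neg_iff, le_div_iff₀ (by linarith)]
  have h := sub_one_mul_padicValNat_factorial (p := p) j
  have : ((p - 1 : ℕ) : ℝ) * padicValNat p j ! ≤ j := by exact_mod_cast h ▸ Nat.sub_le _ _
  rwa [Nat.cast_sub hp.out.one_le, Nat.cast_one, mul_comm] at this

lemma padicNorm_factorial_le [hp : Fact p.Prime] (j : ℕ) :
    (padicNorm p (j ! : ℚ) : ℝ) ≤ p * (j + 1) * ((p : ℝ) ^ (-1 / ((p : ℝ) - 1))) ^ j := by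
  have hp1 : (1 : ℝ) < p := by exact_mod_cast hp.out.one_lt
  set L := (p.digits j).length
  have hpL : (p : ℝ) ^ L ≤ p * (j + 1) := by
    rcases eq_or_ne j 0 with rfl | hj
    · simpa [L] using hp.out.one_lt.le
    · have := Nat.base_pow_length_digits_le p j hp.out.one_lt hj
      calc (p : ℝ) ^ L ≤ p * j := by exact_mod_cast this
        _ ≤ p * (j + 1) := by gcongr; linarith
  have hexp : (j : ℝ) / (p - 1) ≤ padicValNat p j ! + L := by
    rw [div_le_iff₀ (by linarith)]
    have := le_sub_one_mul_padicValNat_factorial_add_length_digits (p := p) j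
    have : (j : ℝ) ≤ ((p - 1 : ℕ) : ℝ) * (padicValNat p j ! + L) := by exact_mod_cast this
    rwa [Nat.cast_sub hp.out.one_le, Nat.cast_one, mul_comm] at this
  rw [padicNorm_factorial_eq, rpow_neg_one_div_sub_one_pow, ← div_le_iff₀ (by positivity),
    ← Real.rpow_sub (by linarith)]
  calc (p : ℝ) ^ (-(padicValNat p j ! : ℝ) - -(j : ℝ) / (p - 1)) ≤ (p : ℝ) ^ (L : ℝ) := by
        apply Real.rpow_le_rpow_of_exponent_le hp1.le
        rw [neg_div]; linarith
    _ ≤ p * (j + 1) := by rwa [Real.rpow_natCast]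

lemma one_le_mul_rpow_neg_one_div_sub_one [hp : Fact p.Prime] :
    1 ≤ (p : ℝ) * (p : ℝ) ^ (-1 / ((p : ℝ) - 1)) := by
  have hp2 : (2 : ℝ) ≤ p := by exact_mod_cast hp.out.two_le
  nth_rw 1 [← Real.rpow_one (p : ℝ)]
  rw [← Real.rpow_add (by positivity)]
  apply Real.one_le_rpow (by linarith)
  rw [neg_div, ← sub_eq_add_neg, sub_nonneg, div_le_one (by linarith)]
  linarith

end Padic

section Fpoly

variable {F : Type*} [Field F] {s : ℕ} (α : Fin s → F) (m : Fin s → ℕ)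

lemma taylor_fpoly (x : F) : taylor x (fpoly α m) = ∏ k, (X + C (x - α k)) ^ m k := by
  simp only [fpoly, taylor_apply, Polynomial.prod_comp, pow_comp, sub_comp, X_comp, C_comp, C_sub]
  congr 1; funext k; ring_nf

lemma natDegree_fpoly_le : (fpoly α m).natDegree ≤ ∑ k, m k :=
  (natDegree_prod_le _ _).trans <| sum_le_sum fun _ _ =>
    (natDegree_pow_le_of_le _ (natDegree_X_sub_C_le _)).trans_eq (mul_one _)

lemma X_pow_dvd_taylor_fpoly (i : Fin s) : X ^ m i ∣ taylor (α i) (fpoly α m) := by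
  rw [taylor_fpoly]
  convert dvd_prod_of_mem (fun k => (X + C (α i - α k)) ^ m k) (mem_univ i) using 1
  simp

lemma eval_Ppoly (x : F) :
    (Ppoly α m).eval x = ∑ j ∈ range (∑ k, m k + 1), (derivative^[j] (fpoly α m)).eval x :=
  eval_finsetSum _ _ _

end Fpoly

lemma norm_factorial_le_of_le {F : Type*} [NormedField F] (hnat : ∀ k : ℕ, ‖(k : F)‖ ≤ 1)
    {a b : ℕ} (hab : a ≤ b) : ‖(b ! : F)‖ ≤ ‖(a ! : F)‖ := by
  obtain ⟨k, hk⟩ := Nat.factorial_dvd_factorial hab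
  rw [hk, Nat.cast_mul, norm_mul]
  exact mul_le_of_le_one_right (norm_nonneg _) (hnat k)

section Ultrametric

variable {F : Type*} [NormedField F] [IsUltrametricDist F]

lemma norm_expF_sub_sum_range_le [CharZero F] [CompleteSpace F] {δ : ℝ} (hδ : 0 < δ)
    (hfact_ge : ∀ j, δ ^ j ≤ ‖(j ! : F)‖) {h : F} (hh : ‖h‖ < δ) (k : ℕ) :
    ‖expF h - ∑ t ∈ range k, h ^ t / (t ! : F)‖ ≤ (‖h‖ / δ) ^ k := by
  have hr : 0 ≤ ‖h‖ / δ := by positivity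
  have hr1 : ‖h‖ / δ < 1 := (div_lt_one hδ).mpr hh
  have hterm : ∀ t, ‖h ^ t / (t ! : F)‖ ≤ (‖h‖ / δ) ^ t := fun t => by
    rw [norm_div, norm_pow, div_pow]
    exact div_le_div_of_nonneg_left (by positivity) (by positivity) (hfact_ge t)
  have hsum : Summable fun t => h ^ t / (t ! : F) :=
    .of_norm_bounded (summable_geometric_of_lt_one hr hr1) hterm
  rw [expF, ← hsum.sum_add_tsum_nat_add k, add_sub_cancel_left]
  refine IsUltrametricDist.norm_tsum_le_of_forall_le_of_nonneg (by positivity) fun t => ?_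
  exact (hterm _).trans (pow_le_pow_of_le_one hr hr1.le (Nat.le_add_left k t))

variable {s : ℕ} (α : Fin s → F) (m : Fin s → ℕ)

lemma norm_eval_iterate_derivative_fpoly_mul_pow_le {c : ℝ} (hc : 0 < c) (x : F) (j : ℕ) :
    ‖(derivative^[j] (fpoly α m)).eval x‖ * c ^ j ≤
      ‖(j ! : F)‖ * ∏ k, max ‖x - α k‖ c ^ m k := by
  rw [eval_iterate_derivative_eq_factorial_mul_coeff_taylor, norm_mul, mul_assoc, taylor_fpoly]
  exact mul_le_mul_of_nonneg_left (norm_coeff_prod_X_add_C_pow_mul_pow_le _ _ _ hc j)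
    (norm_nonneg _)

lemma norm_eval_Ppoly_le_norm_factorial (hnat : ∀ k : ℕ, ‖(k : F)‖ ≤ 1) (i : Fin s)
    (hα : ∀ k, ‖α i - α k‖ ≤ 1) : ‖(Ppoly α m).eval (α i)‖ ≤ ‖((m i) ! : F)‖ := by
  rw [eval_Ppoly]
  refine IsUltrametricDist.norm_sum_le_of_forall_le_of_nonneg (norm_nonneg _) fun j _ => ?_
  rcases lt_or_ge j (m i) with hj | hj
  · rw [eval_iterate_derivative_eq_factorial_mul_coeff_taylor,
      X_pow_dvd_iff.mp (X_pow_dvd_taylor_fpoly α m i) j hj, mul_zero, norm_zero]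
    exact norm_nonneg _
  · calc ‖(derivative^[j] (fpoly α m)).eval (α i)‖
        = ‖(derivative^[j] (fpoly α m)).eval (α i)‖ * 1 ^ j := by rw [one_pow, mul_one]
      _ ≤ ‖(j ! : F)‖ * ∏ k, max ‖α i - α k‖ 1 ^ m k :=
          norm_eval_iterate_derivative_fpoly_mul_pow_le α m one_pos _ j
      _ = ‖(j ! : F)‖ := by simp [max_eq_right (hα _)]
      _ ≤ ‖((m i) ! : F)‖ := norm_factorial_le_of_le hnat hj

variable {A δ : ℝ}

lemma norm_eval_Ppoly_le (hδ : 0 < δ) (hfact_le : ∀ j, ‖(j ! : F)‖ ≤ A * (j + 1) * δ ^ j)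
    (x : F) :
    ‖(Ppoly α m).eval x‖ ≤ A * (∑ k, m k + 1) * ∏ k, max ‖x - α k‖ δ ^ m k := by
  have hA : 0 ≤ A := zero_le_one.trans (by simpa using hfact_le 0)
  rw [eval_Ppoly]
  refine IsUltrametricDist.norm_sum_le_of_forall_le_of_nonneg (by positivity) fun j hj => ?_
  have hj : (j : ℝ) + 1 ≤ ∑ k, m k + 1 := by
    have := mem_range.mp hj; exact_mod_cast this
  refine le_of_mul_le_mul_right ?_ (pow_pos hδ j)
  calc ‖(derivative^[j] (fpoly α m)).eval x‖ * δ ^ j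
      ≤ ‖(j ! : F)‖ * ∏ k, max ‖x - α k‖ δ ^ m k :=
        norm_eval_iterate_derivative_fpoly_mul_pow_le α m hδ x j
    _ ≤ A * (j + 1) * δ ^ j * ∏ k, max ‖x - α k‖ δ ^ m k := by gcongr; exact hfact_le j
    _ ≤ A * (∑ k, m k + 1) * (∏ k, max ‖x - α k‖ δ ^ m k) * δ ^ j := by
        rw [mul_right_comm _ (δ ^ j)]; gcongr

lemma norm_eval_Ppoly_mul_expF_sub_le [CharZero F] [CompleteSpace F] (hδ : 0 < δ)
    (hfact_le : ∀ j, ‖(j ! : F)‖ ≤ A * (j + 1) * δ ^ j) (hfact_ge : ∀ j, δ ^ j ≤ ‖(j ! : F)‖)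
    (x : F) {h : F} (hpos : 0 < ‖h‖) (hh : ‖h‖ < δ) :
    ‖(Ppoly α m).eval x * expF h - (Ppoly α m).eval (x + h)‖ ≤
      A * (∑ k, m k + 1) * (∏ k, max ‖x - α k‖ ‖h‖ ^ m k) * (‖h‖ / δ) := by
  have hA : 0 ≤ A := zero_le_one.trans (by simpa using hfact_le 0)
  rw [eval_Ppoly, eval_Ppoly, sum_range_iterate_derivative_eval_add _
    ((natDegree_fpoly_le α m).trans_lt (lt_add_one _)), sum_mul, ← sum_sub_distrib]
  refine IsUltrametricDist.norm_sum_le_of_forall_le_of_nonneg (by positivity) fun j hj => ?_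
  have hj : (j : ℝ) + 1 ≤ ∑ k, m k + 1 := by
    have := mem_range.mp hj; exact_mod_cast this
  rw [← mul_sub, norm_mul]
  calc ‖(derivative^[j] (fpoly α m)).eval x‖ * ‖expF h - ∑ t ∈ range (j + 1), h ^ t / (t ! : F)‖
      ≤ ‖(derivative^[j] (fpoly α m)).eval x‖ * (‖h‖ / δ) ^ (j + 1) := by
        gcongr; exact norm_expF_sub_sum_range_le hδ hfact_ge hh (j + 1)
    _ = ‖(derivative^[j] (fpoly α m)).eval x‖ * ‖h‖ ^ j * (‖h‖ / δ) / δ ^ j := by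
        rw [pow_succ, div_pow]; ring
    _ ≤ ‖(j ! : F)‖ * (∏ k, max ‖x - α k‖ ‖h‖ ^ m k) * (‖h‖ / δ) / δ ^ j := by
        gcongr ?_ * _ / _; exact norm_eval_iterate_derivative_fpoly_mul_pow_le α m hpos x j
    _ ≤ A * (j + 1) * δ ^ j * (∏ k, max ‖x - α k‖ ‖h‖ ^ m k) * (‖h‖ / δ) / δ ^ j := by
        gcongr; exact hfact_le j
    _ = A * (j + 1) * (∏ k, max ‖x - α k‖ ‖h‖ ^ m k) * (‖h‖ / δ) := by
        field_simp
    _ ≤ A * (∑ k, m k + 1) * (∏ k, max ‖x - α k‖ ‖h‖ ^ m k) * (‖h‖ / δ) := by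
        gcongr

end Ultrametric

lemma Fintype.prod_pow_eq_prod_pow_sub_ite_mul {ι M : Type*} [Fintype ι] [DecidableEq ι]
    [CommMonoid M] (a : ι → M) (n : ι → ℕ) {ℓ : ι} (hℓ : 0 < n ℓ) :
    ∏ k, a k ^ n k = (∏ k, a k ^ (n k - if k = ℓ then 1 else 0)) * a ℓ := by
  have hrest : ∏ k ∈ univ.erase ℓ, a k ^ (n k - if k = ℓ then 1 else 0) =
      ∏ k ∈ univ.erase ℓ, a k ^ n k :=
    Finset.prod_congr rfl fun k hk => by rw [if_neg (ne_of_mem_erase hk), Nat.sub_zero]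
  rw [← mul_prod_erase univ _ (mem_univ ℓ),
    ← mul_prod_erase univ (fun k => a k ^ (n k - if k = ℓ then 1 else 0)) (mem_univ ℓ),
    if_pos rfl, hrest, mul_right_comm, ← pow_succ, Nat.sub_add_cancel hℓ]

lemma Fintype.sum_sub_ite_add_one {ι : Type*} [Fintype ι] [DecidableEq ι] (n : ι → ℕ) {ℓ : ι}
    (hℓ : 0 < n ℓ) : ∑ k, (n k - if k = ℓ then 1 else 0) + 1 = ∑ k, n k := by
  have := single_le_sum (fun k _ => Nat.zero_le (n k)) (mem_univ ℓ)
  have hle (k : ι) : (if k = ℓ then 1 else 0) ≤ n k := by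
    split_ifs with h
    · exact h ▸ hℓ
    · exact Nat.zero_le _
  rw [sum_tsub_distrib _ fun k _ => hle k, Fintype.sum_ite_eq']
  omega

section ShiftedExponents

variable {F : Type*} [NormedField F] [IsUltrametricDist F] {s : ℕ} (α : Fin s → F)
  (n : Fin s → ℕ) {ℓ : Fin s} {A δ : ℝ}

lemma norm_eval_Ppoly_sub_single_le (hℓ : 0 < n ℓ) (hδ : 0 < δ)
    (hfact_le : ∀ j, ‖(j ! : F)‖ ≤ A * (j + 1) * δ ^ j) (hAδ : 1 ≤ A * δ) (x : F) :
    ‖(Ppoly α fun k => n k - if k = ℓ then 1 else 0).eval x‖ ≤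
      A ^ 2 * ((∑ k, n k : ℕ) : ℝ) * ∏ k, max ‖x - α k‖ δ ^ n k := by
  set m : Fin s → ℕ := fun k => n k - if k = ℓ then 1 else 0
  have hA : 0 ≤ A := zero_le_one.trans (by simpa using hfact_le 0)
  calc ‖(Ppoly α m).eval x‖
      ≤ A * (∑ k, m k + 1) * ∏ k, max ‖x - α k‖ δ ^ m k := norm_eval_Ppoly_le α m hδ hfact_le x
    _ ≤ A * (∑ k, m k + 1) * ((∏ k, max ‖x - α k‖ δ ^ m k) * (A * max ‖x - α ℓ‖ δ)) := by
        gcongr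
        exact le_mul_of_one_le_right (by positivity)
          (hAδ.trans (by gcongr; exact le_max_right _ _))
    _ = A ^ 2 * ((∑ k, n k : ℕ) : ℝ) * ∏ k, max ‖x - α k‖ δ ^ n k := by
        rw [Fintype.prod_pow_eq_prod_pow_sub_ite_mul _ n hℓ,
          ← Fintype.sum_sub_ite_add_one n hℓ]
        push_cast; ring

lemma norm_eval_Ppoly_sub_single_mul_expF_sub_le [CharZero F] [CompleteSpace F] (hℓ : 0 < n ℓ)
    (hδ : 0 < δ) (hfact_le : ∀ j, ‖(j ! : F)‖ ≤ A * (j + 1) * δ ^ j)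
    (hfact_ge : ∀ j, δ ^ j ≤ ‖(j ! : F)‖) (hAδ : 1 ≤ A * δ) {x y : F} (hpos : 0 < ‖y - x‖)
    (hlt : ‖y - x‖ < δ) :
    ‖(Ppoly α fun k => n k - if k = ℓ then 1 else 0).eval x * expF (y - x) -
        (Ppoly α fun k => n k - if k = ℓ then 1 else 0).eval y‖ ≤
      A ^ 2 * ((∑ k, n k : ℕ) : ℝ) * ∏ k, max ‖x - α k‖ ‖y - α k‖ ^ n k := by
  set m : Fin s → ℕ := fun k => n k - if k = ℓ then 1 else 0
  have hA : 0 ≤ A := zero_le_one.trans (by simpa using hfact_le 0)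
  have hyx (k : Fin s) : ‖y - x‖ ≤ max ‖x - α k‖ ‖y - α k‖ := by
    rw [max_comm, norm_sub_rev x]
    simpa only [dist_eq_norm] using dist_triangle_max y (α k) x
  have hm := norm_eval_Ppoly_mul_expF_sub_le α m hδ hfact_le hfact_ge x hpos hlt
  rw [add_sub_cancel] at hm
  calc _ ≤ A * (∑ k, m k + 1) * (∏ k, max ‖x - α k‖ ‖y - α k‖ ^ m k) * (‖y - x‖ / δ) :=
        hm.trans <| by
          gcongr _ * (∏ k, ?_ ^ _) * _ with k
          exact max_le (le_max_left _ _) (hyx k)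
    _ ≤ A * (∑ k, m k + 1) * (∏ k, max ‖x - α k‖ ‖y - α k‖ ^ m k) *
          (A * max ‖x - α ℓ‖ ‖y - α ℓ‖) := by
        gcongr
        rw [div_le_iff₀ hδ]
        nlinarith [hyx ℓ]
    _ = A ^ 2 * ((∑ k, n k : ℕ) : ℝ) * ∏ k, max ‖x - α k‖ ‖y - α k‖ ^ n k := by
        rw [Fintype.prod_pow_eq_prod_pow_sub_ite_mul _ n hℓ,
          ← Fintype.sum_sub_ite_add_one n hℓ]
        push_cast; ring

end ShiftedExponents

theorem stmt12_general {F : Type*} [NormedField F] [CharZero F] [CompleteSpace F]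
    (p : ℕ) (hp : p.Prime)
    (hna : ∀ x y : F, ‖x + y‖ ≤ max ‖x‖ ‖y‖)
    (hQ : ∀ q : ℚ, ‖(q : F)‖ = (padicNorm p q : ℝ))
    (δ : ℝ) (hδ : δ = (p : ℝ) ^ (-(1 : ℝ) / ((p : ℝ) - 1)))
    {s : ℕ} (α : Fin s → F)
    (n : Fin s → ℕ) (hn : ∀ i, 0 < n i) (N : ℕ) (hN : N = ∑ k, n k)
    (ℓ : Fin s) (P : F[X])
    (hP : P = Ppoly α fun k => n k - if k = ℓ then 1 else 0) :
    (∀ i, ‖P.eval (α i)‖ ≤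
        (p : ℝ) ^ 3 * N * ∏ k, max ‖α i - α k‖ δ ^ n k) ∧
      (∀ i, (∀ k, k ≠ i → ‖α i - α k‖ = 1) →
        ‖P.eval (α i)‖ ≤ ‖((n i - 1).factorial : F)‖) ∧
      (∀ i j, 0 < ‖α j - α i‖ → ‖α j - α i‖ < δ →
        ‖P.eval (α i) * expF (α j - α i) - P.eval (α j)‖ ≤
          (p : ℝ) ^ 3 * N * ∏ k, max ‖α i - α k‖ ‖α j - α k‖ ^ n k) := by
  have : Fact p.Prime := ⟨hp⟩
  have : IsUltrametricDist F :=
    IsUltrametricDist.isUltrametricDist_of_forall_norm_add_le_max_norm hna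
  have hnorm (k : ℕ) : ‖(k : F)‖ = padicNorm p k := by rw [← hQ, Rat.cast_natCast]
  have hfact_le (j : ℕ) : ‖(j ! : F)‖ ≤ p * (j + 1) * δ ^ j :=
    hδ ▸ (hnorm _).trans_le (padicNorm_factorial_le j)
  have hfact_ge (j : ℕ) : δ ^ j ≤ ‖(j ! : F)‖ :=
    hδ ▸ (pow_le_padicNorm_factorial j).trans_eq (hnorm _).symm
  have hδ0 : 0 < δ := hδ ▸ Real.rpow_pos_of_pos (by exact_mod_cast hp.pos) _
  have hpδ : 1 ≤ p * δ := hδ ▸ one_le_mul_rpow_neg_one_div_sub_one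
  have hp23 : (p : ℝ) ^ 2 ≤ p ^ 3 := pow_le_pow_right₀ (by exact_mod_cast hp.one_le) (by norm_num)
  subst hP hN
  refine ⟨fun i => ?_, fun i hi => ?_, fun i j hpos hlt => ?_⟩
  · refine (norm_eval_Ppoly_sub_single_le α n (hn ℓ) hδ0 hfact_le hpδ _).trans ?_
    gcongr
  · have hnat (k : ℕ) : ‖(k : F)‖ ≤ 1 := (hnorm k).trans_le (by exact_mod_cast padicNorm.of_nat k)
    refine (norm_eval_Ppoly_le_norm_factorial α _ hnat i fun k => ?_).trans
      (norm_factorial_le_of_le hnat (Nat.sub_le_sub_left (by split <;> omega) _))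
    rcases eq_or_ne k i with rfl | hk
    · simp
    · exact (hi k hk).le
  · refine (norm_eval_Ppoly_sub_single_mul_expF_sub_le α n (hn ℓ) hδ0 hfact_le hfact_ge hpδ hpos
      hlt).trans ?_
    gcongr

/-- With `P = P_{n−e_ℓ}` for `n` with positive coordinates:
(a) `‖P(αᵢ)‖ ≤ p³ N ∏ₖ max(‖αᵢ−αₖ‖, δ)^{nₖ}` for every `i`;
(b) if `‖αᵢ−αₖ‖ = 1` for all `k ≠ i`, then `‖P(αᵢ)‖ ≤ ‖(nᵢ−1)!‖`;
(c) `‖P(αᵢ)·exp(αⱼ−αᵢ) − P(αⱼ)‖ ≤ p³ N ∏ₖ max(‖αᵢ−αₖ‖,‖αⱼ−αₖ‖)^{nₖ}`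
whenever `0 < ‖αⱼ−αᵢ‖ < δ`. -/
theorem stmt12 {F : Type*} [NormedField F] [CharZero F] [CompleteSpace F]
    (p : ℕ) (hp : p.Prime)
    (hna : ∀ x y : F, ‖x + y‖ ≤ max ‖x‖ ‖y‖)
    (hQ : ∀ q : ℚ, ‖(q : F)‖ = (padicNorm p q : ℝ))
    (δ : ℝ) (hδ : δ = (p : ℝ) ^ (-(1 : ℝ) / ((p : ℝ) - 1)))
    {s : ℕ} (α : Fin s → F) (hα : Function.Injective α)
    (n : Fin s → ℕ) (hn : ∀ i, 0 < n i) (N : ℕ) (hN : N = ∑ k, n k)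
    (ℓ : Fin s) (P : F[X])
    (hP : P = Ppoly α fun k => n k - if k = ℓ then 1 else 0) :
    (∀ i, ‖P.eval (α i)‖ ≤
        (p : ℝ) ^ 3 * N * ∏ k, max ‖α i - α k‖ δ ^ n k) ∧
      (∀ i, (∀ k, k ≠ i → ‖α i - α k‖ = 1) →
        ‖P.eval (α i)‖ ≤ ‖((n i - 1).factorial : F)‖) ∧
      (∀ i j, 0 < ‖α j - α i‖ → ‖α j - α i‖ < δ →
        ‖P.eval (α i) * expF (α j - α i) - P.eval (α j)‖ ≤
          (p : ℝ) ^ 3 * N * ∏ k, max ‖α i - α k‖ ‖α j - α k‖ ^ n k) :=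
  stmt12_general p hp hna hQ δ hδ α n hn N hN ℓ P hP
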